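/- For every even natural number n ≥ 2, the Möbius dual of the Fibonacci sequence at 2n equals the product of the Möbius dual of the Lucas sequence at n and the Möbius dual of the Fibonacci sequence at n: ∏_{d | 2n} F_d^{μ(2n/d)} = (∏_{d | n} L_d^{μ(n/d)}) · (∏_{d | n} F_d^{μ(n/d)}). -/

import Mathlib

open ArithmeticFunction Finset

def lucas : ℕ → ℕ
  | 0 => 2
  | 1 => 1
  | (n + 2) => lucas (n + 1) + lucas n

lemma lucas_add_fib (n : ℕ) : lucas n + Nat.fib n = 2 * Nat.fib (n + 1) := by
  induction n using Nat.twoStepInduction with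
  | zero => rfl
  | one => rfl
  | more n ih1 ih2 =>
      have h1 : Nat.fib (n + 2) = Nat.fib n + Nat.fib (n + 1) := Nat.fib_add_two
      have h2 : Nat.fib (n + 3) = Nat.fib (n + 1) + Nat.fib (n + 2) := Nat.fib_add_two
      simp only [lucas, h1, h2] at *
      omega

lemma fib_two_mul' (n : ℕ) : Nat.fib (2 * n) = Nat.fib n * lucas n := by
  have h := Nat.fib_two_mul n
  have h2 := lucas_add_fib n
  rw [h, show 2 * Nat.fib (n + 1) - Nat.fib n = lucas n by omega]

theorem moebius_dual_doubling_even (n : ℕ) (hn : 2 ≤ n) (heven : Even n) :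
    ∏ d ∈ (2 * n).divisors, ((Nat.fib d : ℚ)) ^ (moebius ((2 * n) / d)) =
      (∏ d ∈ n.divisors, ((lucas d : ℚ)) ^ (moebius (n / d))) *
        (∏ d ∈ n.divisors, ((Nat.fib d : ℚ)) ^ (moebius (n / d))) := by
  have hn0 : n ≠ 0 := by omega
  obtain ⟨m, hm⟩ := heven
  have hm' : n = 2 * m := by omega
  have key : ∏ d ∈ (2 * n).divisors, ((Nat.fib d : ℚ)) ^ (moebius ((2 * n) / d)) =
      ∏ d ∈ n.divisors.image (2 * ·), ((Nat.fib d : ℚ)) ^ (moebius ((2 * n) / d)) := by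
    refine (Finset.prod_subset ?_ ?_).symm
    · intro d hd
      simp only [Finset.mem_image, Nat.mem_divisors] at hd ⊢
      obtain ⟨e, ⟨he, _⟩, rfl⟩ := hd
      exact ⟨mul_dvd_mul_left 2 he, by omega⟩
    · intro d hd hnd
      have hdvd : d ∣ 2 * n := (Nat.mem_divisors.mp hd).1
      have hd0 : d ≠ 0 := Nat.pos_of_mem_divisors hd |>.ne'
      have hodd : ¬ 2 ∣ d := by
        intro h2d
        obtain ⟨e, he⟩ := h2d
        apply hnd
        simp only [Finset.mem_image, Nat.mem_divisors]
        refine ⟨e, ⟨?_, hn0⟩, he.symm⟩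
        have : 2 * e ∣ 2 * n := he ▸ hdvd
        exact (mul_dvd_mul_iff_left (two_ne_zero)).mp this
      have hc2 : Nat.Coprime 2 d := (Nat.Prime.coprime_iff_not_dvd Nat.prime_two).mpr hodd
      have hc4 : Nat.Coprime d 4 := by
        have := (Nat.Coprime.mul hc2 hc2).symm
        simpa using this
      have hdm : d ∣ m := by
        have hd4m : d ∣ m * 4 := by
          have : m * 4 = 2 * n := by omega
          rw [this]; exact hdvd
        exact Nat.Coprime.dvd_of_dvd_mul_right hc4 hd4m
      have h4 : 4 ∣ (2 * n) / d := by
        obtain ⟨k, hk⟩ := hdm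
        refine ⟨k, ?_⟩
        have h2n : 2 * n = d * (4 * k) := by rw [hm', hk]; ring
        rw [h2n, Nat.mul_div_cancel_left _ (by omega : 0 < d)]
      have hsq : ¬ Squarefree ((2 * n) / d) := by
        intro hs
        have := hs 2 (by obtain ⟨k, hk⟩ := h4; exact ⟨k, by omega⟩)
        simp [Nat.isUnit_iff] at this
      rw [moebius_eq_zero_of_not_squarefree hsq, zpow_zero]
  rw [key, Finset.prod_image (by intro a _ b _ h; dsimp only at h; omega)]
  rw [← Finset.prod_mul_distrib]
  apply Finset.prod_congr rfl
  intro d hd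
  have hd0 : 0 < d := Nat.pos_of_mem_divisors hd
  rw [Nat.mul_div_mul_left _ _ (by norm_num : 0 < 2), fib_two_mul']
  push_cast
  rw [mul_zpow]
  ring
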